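/- In the on-chain-verified audit game, if (i) S_a ≥ ((1 − p_a)/p_a)·R_a + c_a/(ε·p_a), (ii) R_a ≥ c_a/(1 − ε), and (iii) R_s ≥ c_s, then the honest profile σ^h (every SP plays the honest strategy) is a pure Nash equilibrium. -/
import Mathlib


/-!
On-chain-verified audit game: `N ≥ 3` storage providers (SPs), parameters
`R_s > 0` (storage reward), `R_a > 0` (per-audit reward), `c_s > 0` (storage cost),
`c_a > 0` (audit cost), `S_a ≥ 0` (slashing penalty), `p_a ∈ (0,1]` (inspection
probability), `ε ∈ (0,1)` (noise). A pure strategy of SP `i` is a triple `(s, a, ρ)`: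
a storage bit, audit bits for each other SP, and reporting policies `ρ j : Bool → Bool`
(report as a function of having received a valid proof).
-/

open Finset

/-- A pure strategy of storage provider `i` in the on-chain-verified audit game. -/
structure Strat (N : ℕ) (i : Fin N) where
  /-- whether `i` stores its assigned data -/
  s : Bool
  /-- whether `i` audits SP `j` (at cost `c_a`) -/
  a : {j : Fin N // j ≠ i} → Bool
  /-- `i`'s reporting policy about `j`, as a function of whether a valid proof was received -/
  ρ : {j : Fin N // j ≠ i} → Bool → Bool

/-- Numerical value of a Boolean choice. -/
def b01 (b : Bool) : ℝ := if b then 1 else 0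

/-- Expected audit payoff of the auditor from one ordered pair `(i,j)`, where `sj` is the
auditee's storage bit, `a` the auditor's audit bit, and `ρ` the auditor's reporting policy.
The backing probability is `β = 1 − ε` if the auditee stores and `0` otherwise; an unbacked
✓ report earns `(1 − p_a)·R_a − p_a·S_a` in expectation. -/
noncomputable def pairPayoff (Ra ca Sa pa ε : ℝ) (sj a : Bool) (ρ : Bool → Bool) : ℝ :=
  let β : ℝ := if sj then 1 - ε else 0
  let F : ℝ := (1 - pa) * Ra - pa * Sa
  if a then β * b01 (ρ true) * Ra + (1 - β) * b01 (ρ false) * F - ca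
  else b01 (ρ false) * (β * Ra + (1 - β) * F)

/-- The deterministic report of `i` about `j`: `r_i^j = ρ_i^j (a_i^j · s_j)`. -/
def report {N : ℕ} (σ : ∀ i : Fin N, Strat N i) (i : Fin N) (j : {j : Fin N // j ≠ i}) : Bool :=
  (σ i).ρ j ((σ i).a j && (σ j.1).s)

/-- Number of SPs `j ≠ i` whose deterministic report about `i` is ✓. -/
def trueReports {N : ℕ} (σ : ∀ i : Fin N, Strat N i) (i : Fin N) : ℕ :=
  (univ.filter fun j : {j : Fin N // j ≠ i} => report σ j.1 ⟨i, Ne.symm j.2⟩ = true).card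

/-- Total (expected) utility of SP `i`:
`u_i(σ) = R_s·1[|{j ≠ i : r_j^i = 1}| > N/2] − c_s·s_i + Σ_{j≠i} pairPayoff(i,j)`. -/
noncomputable def U {N : ℕ} (Rs Ra cs ca Sa pa ε : ℝ) (σ : ∀ i : Fin N, Strat N i)
    (i : Fin N) : ℝ :=
  Rs * (if (N : ℝ) / 2 < (trueReports σ i : ℝ) then 1 else 0)
    - cs * b01 (σ i).s
    + ∑ j : {j : Fin N // j ≠ i}, pairPayoff Ra ca Sa pa ε (σ j.1).s ((σ i).a j) ((σ i).ρ j)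

/-- Pure Nash equilibrium: no SP can strictly increase its own utility by unilaterally
changing its strategy. -/
def IsNashEq {N : ℕ} (Rs Ra cs ca Sa pa ε : ℝ) (σ : ∀ i : Fin N, Strat N i) : Prop :=
  ∀ (i : Fin N) (τ : Strat N i),
    U Rs Ra cs ca Sa pa ε (Function.update σ i τ) i ≤ U Rs Ra cs ca Sa pa ε σ i

/-- The honest strategy profile: store, audit everyone, report ✓ iff a valid proof
was received. -/
def honest (N : ℕ) : ∀ i : Fin N, Strat N i :=
  fun _ => ⟨true, fun _ => true, fun _ b => b⟩

/-- The fully dishonest strategy profile: don't store, don't audit, always report ✓. -/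
def dishonest (N : ℕ) : ∀ i : Fin N, Strat N i :=
  fun _ => ⟨false, fun _ => false, fun _ _ => true⟩

private lemma pair_le_aux (Ra ca Sa pa ε : ℝ) (hca : 0 < ca)
    (hF : ε * ((1 - pa) * Ra - pa * Sa) ≤ -ca) (h2' : ca ≤ (1 - ε) * Ra)
    (a : Bool) (ρ : Bool → Bool) :
    pairPayoff Ra ca Sa pa ε true a ρ ≤ (1 - ε) * Ra - ca := by
  cases a <;> cases hρt : ρ true <;> cases hρf : ρ false <;>
    simp only [pairPayoff, b01, hρt, hρf, if_true, if_false, Bool.false_eq_true, reduceIte] <;>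
    nlinarith [hF, h2', hca.le]

/-- In the on-chain-verified audit game, if
(i) `S_a ≥ ((1 − p_a)/p_a)·R_a + c_a/(ε·p_a)`, (ii) `R_a ≥ c_a/(1 − ε)`, and
(iii) `R_s ≥ c_s`, then the honest profile is a pure Nash equilibrium. -/
theorem onchain_honest_is_nash
    (N : ℕ) (hN : 3 ≤ N) (Rs Ra cs ca Sa pa ε : ℝ)
    (hRs : 0 < Rs) (hRa : 0 < Ra) (hcs : 0 < cs) (hca : 0 < ca) (hSa : 0 ≤ Sa)
    (hpa0 : 0 < pa) (hpa1 : pa ≤ 1) (hε0 : 0 < ε) (hε1 : ε < 1)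
    (h1 : ((1 - pa) / pa) * Ra + ca / (ε * pa) ≤ Sa)
    (h2 : ca / (1 - ε) ≤ Ra)
    (h3 : cs ≤ Rs) :
    IsNashEq Rs Ra cs ca Sa pa ε (honest N) := by
  intro i τ
  -- basic numeric facts
  have hε1' : (0:ℝ) < 1 - ε := by linarith
  have h2' : ca ≤ (1 - ε) * Ra := by
    have := (div_le_iff₀ hε1').mp h2
    nlinarith
  have key := mul_le_mul_of_nonneg_left h1 (mul_pos hε0 hpa0).le
  have heq : ε * pa * (((1 - pa) / pa) * Ra + ca / (ε * pa)) = ε * ((1 - pa) * Ra) + ca := by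
    field_simp
  rw [heq] at key
  have hF : ε * ((1 - pa) * Ra - pa * Sa) ≤ -ca := by nlinarith
  -- per-pair bound
  have hpair := pair_le_aux Ra ca Sa pa ε hca hF h2'
  have hhon : pairPayoff Ra ca Sa pa ε true true (fun b => b) = (1 - ε) * Ra - ca := by
    simp [pairPayoff, b01]
  -- cardinality of the index type
  have hcard : Fintype.card {j : Fin N // j ≠ i} = N - 1 := by
    simp [Fintype.card_subtype_compl]
  have hNR : (N:ℝ) / 2 < ((N - 1 : ℕ) : ℝ) := by
    have h3N : (3:ℝ) ≤ (N:ℝ) := by exact_mod_cast hN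
    rw [Nat.cast_sub (by omega : 1 ≤ N)]
    push_cast
    linarith
  set σ' := Function.update (honest N) i τ with hσ'def
  have hσ'i : σ' i = τ := Function.update_self i τ (honest N)
  have hσ'j : ∀ j : {j : Fin N // j ≠ i}, σ' j.1 = honest N j.1 :=
    fun j => Function.update_of_ne j.2 τ (honest N)
  -- reports about i
  have hrep : ∀ j : {j : Fin N // j ≠ i}, report σ' j.1 ⟨i, Ne.symm j.2⟩ = τ.s := by
    intro j
    simp [report, hσ'j j, honest, hσ'i]
  have hrep_h : ∀ j : {j : Fin N // j ≠ i}, report (honest N) j.1 ⟨i, Ne.symm j.2⟩ = true := by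
    intro j
    simp [report, honest]
  have hTRh : trueReports (honest N) i = N - 1 := by
    unfold trueReports
    rw [Finset.filter_true_of_mem (fun j _ => hrep_h j), Finset.card_univ, hcard]
  have hTR : trueReports σ' i = if τ.s then N - 1 else 0 := by
    unfold trueReports
    cases hs : τ.s
    · rw [Finset.filter_false_of_mem (fun j _ => by rw [hrep j, hs]; simp)]
      simp
    · rw [Finset.filter_true_of_mem (fun j _ => by rw [hrep j, hs]), Finset.card_univ, hcard]
      simp
  -- compute honest utility
  have hUh : U Rs Ra cs ca Sa pa ε (honest N) i
      = Rs - cs + (Fintype.card {j : Fin N // j ≠ i} : ℝ) * ((1 - ε) * Ra - ca) := by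
    unfold U
    rw [hTRh, if_pos hNR]
    simp only [honest, b01, if_true]
    rw [Finset.sum_congr rfl (fun j _ => hhon), Finset.sum_const, Finset.card_univ,
      nsmul_eq_mul]
    ring
  -- bound deviant utility
  have hsum : ∑ j : {j : Fin N // j ≠ i},
      pairPayoff Ra ca Sa pa ε (σ' j.1).s ((σ' i).a j) ((σ' i).ρ j)
      ≤ (Fintype.card {j : Fin N // j ≠ i} : ℝ) * ((1 - ε) * Ra - ca) := by
    calc ∑ j : {j : Fin N // j ≠ i},
        pairPayoff Ra ca Sa pa ε (σ' j.1).s ((σ' i).a j) ((σ' i).ρ j)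
        ≤ ∑ _j : {j : Fin N // j ≠ i}, ((1 - ε) * Ra - ca) := by
          refine Finset.sum_le_sum fun j _ => ?_
          rw [hσ'j j]
          exact hpair _ _
      _ = (Fintype.card {j : Fin N // j ≠ i} : ℝ) * ((1 - ε) * Ra - ca) := by
          rw [Finset.sum_const, Finset.card_univ, nsmul_eq_mul]
  have hstore : Rs * (if (N : ℝ) / 2 < ((trueReports σ' i : ℕ) : ℝ) then 1 else 0)
      - cs * b01 (σ' i).s ≤ Rs - cs := by
    rw [hTR, hσ'i]
    cases hs : τ.s
    · simp only [hs, if_false, Bool.false_eq_true, b01]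
      rw [Nat.cast_zero, if_neg (not_lt.mpr (by positivity))]
      simp only [mul_zero]
      linarith
    · simp only [hs, if_true, b01]
      rw [if_pos hNR]
      simp
  rw [hUh]
  unfold U
  calc Rs * (if (N : ℝ) / 2 < ((trueReports σ' i : ℕ) : ℝ) then 1 else 0)
      - cs * b01 (σ' i).s
      + ∑ j : {j : Fin N // j ≠ i},
          pairPayoff Ra ca Sa pa ε (σ' j.1).s ((σ' i).a j) ((σ' i).ρ j)
      ≤ (Rs - cs) + (Fintype.card {j : Fin N // j ≠ i} : ℝ) * ((1 - ε) * Ra - ca) :=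
        add_le_add hstore hsum
    _ = Rs - cs + (Fintype.card {j : Fin N // j ≠ i} : ℝ) * ((1 - ε) * Ra - ca) := rfl
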